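/- arXiv:0909.0767 — 3 statements merged into one kernel-verified Lean document; each statement's English description precedes it below -/
import Mathlib

section
/- Let b : U → ℝ and t₂ : U → ℝ be differentiable, and set b₁ = ∂₁b = −f_x⁻¹ ∂b/∂x. At every point p ∈ U: the equation ∂₂t₂ − b·∂₁t₂ − t₂·(b₁ − (b−1)H) = 0 holds at p if and only if ∂(t₂·b·f_y)/∂x = ∂(t₂·f_x)/∂y at p (i.e., the 1-form t₂ω₄ is closed at p, where ω₄ = −(ω₁ + bω₂) = f_x dx + b f_y dy). -/
open Set

/-- Partial derivative with respect to the first variable. -/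
noncomputable def pdx (g : ℝ × ℝ → ℝ) (p : ℝ × ℝ) : ℝ :=
  deriv (fun x => g (x, p.2)) p.1

/-- Partial derivative with respect to the second variable. -/
noncomputable def pdy (g : ℝ × ℝ → ℝ) (p : ℝ × ℝ) : ℝ :=
  deriv (fun y => g (p.1, y)) p.2

/-- The web function `H = f_{xy} / (f_x f_y)`. -/
noncomputable def Hf (f : ℝ × ℝ → ℝ) (p : ℝ × ℝ) : ℝ :=
  pdy (pdx f) p / (pdx f p * pdy f p)

/-!
By the product rule, `∂(t₂ b f_y)/∂x - ∂(t₂ f_x)/∂y` expands into first derivatives of `t₂` and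
`b`, the first derivatives of `f`, and the two mixed partials `f_yx` and `f_xy`. Since `f` is `C²`
these mixed partials agree (Schwarz), and the expansion is then exactly `f_x f_y` times the
Samuelson expression, so one vanishes iff the other does because `f_x f_y ≠ 0`.
-/

open Filter Topology

section PartialDerivatives

variable {g h : ℝ × ℝ → ℝ} {p : ℝ × ℝ} {L : ℝ × ℝ →L[ℝ] ℝ}

lemma HasFDerivAt.pdx_eq (hg : HasFDerivAt g L p) : pdx g p = L (1, 0) :=
  (hg.comp_hasDerivAt p.1 ((hasDerivAt_id p.1).prodMk (hasDerivAt_const _ _))).deriv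

lemma HasFDerivAt.pdy_eq (hg : HasFDerivAt g L p) : pdy g p = L (0, 1) :=
  (hg.comp_hasDerivAt p.2 ((hasDerivAt_const _ _).prodMk (hasDerivAt_id p.2))).deriv

lemma pdx_mul (hg : DifferentiableAt ℝ g p) (hh : DifferentiableAt ℝ h p) :
    pdx (fun q => g q * h q) p = pdx g p * h p + g p * pdx h p := by
  have hline : DifferentiableAt ℝ (fun x : ℝ => ((x, p.2) : ℝ × ℝ)) p.1 :=
    differentiableAt_id.prodMk (differentiableAt_const _)
  exact deriv_mul (hg.comp p.1 hline) (hh.comp p.1 hline)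

lemma pdy_mul (hg : DifferentiableAt ℝ g p) (hh : DifferentiableAt ℝ h p) :
    pdy (fun q => g q * h q) p = pdy g p * h p + g p * pdy h p := by
  have hline : DifferentiableAt ℝ (fun y : ℝ => ((p.1, y) : ℝ × ℝ)) p.2 :=
    (differentiableAt_const _).prodMk differentiableAt_id
  exact deriv_mul (hg.comp p.2 hline) (hh.comp p.2 hline)

lemma pdx_eventuallyEq_fderiv (hg : ∀ᶠ q in 𝓝 p, DifferentiableAt ℝ g q) :
    pdx g =ᶠ[𝓝 p] fun q => fderiv ℝ g q (1, 0) :=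
  hg.mono fun _ hq => hq.hasFDerivAt.pdx_eq

lemma pdy_eventuallyEq_fderiv (hg : ∀ᶠ q in 𝓝 p, DifferentiableAt ℝ g q) :
    pdy g =ᶠ[𝓝 p] fun q => fderiv ℝ g q (0, 1) :=
  hg.mono fun _ hq => hq.hasFDerivAt.pdy_eq

lemma hasFDerivAt_fderiv_apply (hg : DifferentiableAt ℝ (fderiv ℝ g) p) (v : ℝ × ℝ) :
    HasFDerivAt (fun q => fderiv ℝ g q v)
      ((ContinuousLinearMap.apply ℝ ℝ v).comp (fderiv ℝ (fderiv ℝ g) p)) p :=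
  (ContinuousLinearMap.apply ℝ ℝ v).hasFDerivAt.comp p hg.hasFDerivAt

lemma ContDiffAt.eventually_differentiableAt (hg : ContDiffAt ℝ 2 g p) :
    ∀ᶠ q in 𝓝 p, DifferentiableAt ℝ g q :=
  (hg.eventually (by simp)).mono fun _ hq => hq.differentiableAt two_ne_zero

lemma ContDiffAt.differentiableAt_fderiv (hg : ContDiffAt ℝ 2 g p) :
    DifferentiableAt ℝ (fderiv ℝ g) p :=
  (hg.fderiv_right (m := 1) (by norm_num)).differentiableAt one_ne_zero

lemma ContDiffAt.hasFDerivAt_pdx (hg : ContDiffAt ℝ 2 g p) :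
    HasFDerivAt (pdx g)
      ((ContinuousLinearMap.apply ℝ ℝ (1, 0)).comp (fderiv ℝ (fderiv ℝ g) p)) p :=
  (hasFDerivAt_fderiv_apply hg.differentiableAt_fderiv _).congr_of_eventuallyEq
    (pdx_eventuallyEq_fderiv hg.eventually_differentiableAt)

lemma ContDiffAt.hasFDerivAt_pdy (hg : ContDiffAt ℝ 2 g p) :
    HasFDerivAt (pdy g)
      ((ContinuousLinearMap.apply ℝ ℝ (0, 1)).comp (fderiv ℝ (fderiv ℝ g) p)) p :=
  (hasFDerivAt_fderiv_apply hg.differentiableAt_fderiv _).congr_of_eventuallyEq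
    (pdy_eventuallyEq_fderiv hg.eventually_differentiableAt)

lemma ContDiffAt.pdy_pdx_eq_pdx_pdy (hg : ContDiffAt ℝ 2 g p) :
    pdy (pdx g) p = pdx (pdy g) p := by
  rw [hg.hasFDerivAt_pdx.pdy_eq, hg.hasFDerivAt_pdy.pdx_eq]
  exact (hg.isSymmSndFDerivAt (by simp)).eq _ _

end PartialDerivatives

lemma samuelson_eq_zero_iff (A B C T Tx Ty β βx : ℝ) (hA : A ≠ 0) (hB : B ≠ 0) :
    -B⁻¹ * Ty - β * (-A⁻¹ * Tx) - T * (-A⁻¹ * βx - (β - 1) * (C / (A * B))) = 0 ↔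
      (Tx * β + T * βx) * B + T * β * C = Ty * A + T * C := by
  have hfactor : -B⁻¹ * Ty - β * (-A⁻¹ * Tx) - T * (-A⁻¹ * βx - (β - 1) * (C / (A * B)))
      = (A * B)⁻¹ * ((Tx * β + T * βx) * B + T * β * C - (Ty * A + T * C)) := by
    field_simp
    ring
  rw [hfactor]
  simp [hA, hB, sub_eq_zero]

theorem samuelson_closedness_t2_general
    (I J : Set ℝ) (hI : IsOpen I) (hJ : IsOpen J)
    (f : ℝ × ℝ → ℝ) (hf : ContDiffOn ℝ (⊤ : ℕ∞) f (I ×ˢ J))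
    (hfx : ∀ p ∈ I ×ˢ J, pdx f p ≠ 0) (hfy : ∀ p ∈ I ×ˢ J, pdy f p ≠ 0)
    (b t₂ : ℝ × ℝ → ℝ)
    (hb : DifferentiableOn ℝ b (I ×ˢ J)) (ht₂ : DifferentiableOn ℝ t₂ (I ×ˢ J)) :
    ∀ p ∈ I ×ˢ J,
      (-(pdy f p)⁻¹ * pdy t₂ p - b p * (-(pdx f p)⁻¹ * pdx t₂ p)
          - t₂ p * ((-(pdx f p)⁻¹ * pdx b p) - (b p - 1) * Hf f p) = 0) ↔
        pdx (fun q => t₂ q * b q * pdy f q) p = pdy (fun q => t₂ q * pdx f q) p := by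
  intro p hp
  have hU : I ×ˢ J ∈ 𝓝 p := (hI.prod hJ).mem_nhds hp
  have hf₂ : ContDiffAt ℝ 2 f p := (hf.contDiffAt hU).of_le (WithTop.coe_le_coe.2 le_top)
  have hbp := hb.differentiableAt hU
  have ht₂p := ht₂.differentiableAt hU
  rw [pdx_mul (g := fun q => t₂ q * b q) (ht₂p.mul hbp) hf₂.hasFDerivAt_pdy.differentiableAt,
    pdx_mul ht₂p hbp, pdy_mul ht₂p hf₂.hasFDerivAt_pdx.differentiableAt,
    ← hf₂.pdy_pdx_eq_pdx_pdy, Hf]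
  exact samuelson_eq_zero_iff _ _ _ _ _ _ _ _ (hfx p hp) (hfy p hp)

/-- For differentiable `b` and `t₂`, with `b₁ = ∂₁b = -f_x⁻¹ ∂b/∂x`,
the Samuelson equation `∂₂t₂ - b·∂₁t₂ - t₂·(b₁ - (b-1)H) = 0` holds at a point iff
`∂(t₂ b f_y)/∂x = ∂(t₂ f_x)/∂y` there, i.e. iff the 1-form
`t₂ω₄ = t₂·(f_x dx + b f_y dy)` is closed at the point. -/
theorem samuelson_closedness_t2
    (I J : Set ℝ) (hI : IsOpen I) (hJ : IsOpen J)
    (hIc : I.OrdConnected) (hJc : J.OrdConnected)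
    (f : ℝ × ℝ → ℝ) (hf : ContDiffOn ℝ (⊤ : ℕ∞) f (I ×ˢ J))
    (hfx : ∀ p ∈ I ×ˢ J, pdx f p ≠ 0) (hfy : ∀ p ∈ I ×ˢ J, pdy f p ≠ 0)
    (b t₂ : ℝ × ℝ → ℝ)
    (hb : DifferentiableOn ℝ b (I ×ˢ J)) (ht₂ : DifferentiableOn ℝ t₂ (I ×ˢ J)) :
    ∀ p ∈ I ×ˢ J,
      (-(pdy f p)⁻¹ * pdy t₂ p - b p * (-(pdx f p)⁻¹ * pdx t₂ p)
          - t₂ p * ((-(pdx f p)⁻¹ * pdx b p) - (b p - 1) * Hf f p) = 0) ↔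
        pdx (fun q => t₂ q * b q * pdy f q) p = pdy (fun q => t₂ q * pdx f q) p :=
  samuelson_closedness_t2_general I J hI hJ f hf hfx hfy b t₂ hb ht₂
end

section
/- Let τ : U → ℝ be smooth and suppose f_y·∂τ/∂x = f_x·∂τ/∂y at every point of U (equivalently, (∂₁ − ∂₂)τ = 0, i.e., τ is a first integral of the vector field ∂₁ − ∂₂, of which f is a first integral). Then there exists a smooth function w : f(U) → ℝ such that τ = w ∘ f on U; here f(U) is an open interval. -/
/-!
Since `f_y ≠ 0`, every vertical slice of `f` is injective, and since `f_x` has constant sign on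
the connected rectangle, the `x`-shadow of a level set `{f = c}` is an interval. Over it the level
set is the graph of a function `γ`, differentiable by the implicit function theorem, along which
`τ` has derivative `τ_x + γ' τ_y = (f_y τ_x - f_x τ_y) / f_y = 0`. So `τ` is constant on the level
sets of `f`, and `w := τ ∘ (a right inverse of f)` is well defined; near `f p` it agrees with
`c ↦ τ (p.1, ψ c)`, where `ψ` is the smooth implicit solution of `f (p.1, ψ c) = c`.
-/

open Set

open Topology

theorem injOn_of_deriv_ne_zero {φ : ℝ → ℝ} {s : Set ℝ} (hs : IsOpen s) (hsc : s.OrdConnected)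
    (hφ : DifferentiableOn ℝ φ s) (h : ∀ x ∈ s, deriv φ x ≠ 0) : InjOn φ s := by
  have hderiv : ∀ x ∈ s, HasDerivWithinAt φ (deriv φ x) s x := fun x hx =>
    ((hφ x hx).differentiableAt (hs.mem_nhds hx)).hasDerivAt.hasDerivWithinAt
  rcases hasDerivWithinAt_forall_lt_or_forall_gt_of_forall_ne hsc.convex hderiv h with hneg | hpos
  · exact (strictAntiOn_of_deriv_neg hsc.convex hφ.continuousOn (by rwa [hs.interior_eq])).injOn
  · exact (strictMonoOn_of_deriv_pos hsc.convex hφ.continuousOn (by rwa [hs.interior_eq])).injOn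

theorem IsPreconnected.forall_pos_or_forall_neg {α : Type*} [TopologicalSpace α] {s : Set α}
    (hs : IsPreconnected s) {g : α → ℝ} (hg : ContinuousOn g s) (h0 : ∀ p ∈ s, g p ≠ 0) :
    (∀ p ∈ s, 0 < g p) ∨ ∀ p ∈ s, g p < 0 := by
  by_contra! h
  obtain ⟨⟨p, hp, hp0⟩, q, hq, hq0⟩ := h
  obtain ⟨r, hr, hr0⟩ := (hs.image g hg).ordConnected.out (mem_image_of_mem g hp)
    (mem_image_of_mem g hq) ⟨hp0, hq0⟩
  exact h0 r hr hr0

theorem apply_invFunOn_apply_eq {α β γ : Type*} [Nonempty α] {f : α → β} {τ : α → γ}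
    {s : Set α} (h : ∀ p ∈ s, ∀ q ∈ s, f p = f q → τ p = τ q) {p : α} (hp : p ∈ s) :
    τ (Function.invFunOn f s (f p)) = τ p :=
  h _ (Function.invFunOn_mem ⟨p, hp, rfl⟩) p hp (Function.invFunOn_eq ⟨p, hp, rfl⟩)

section PartialDerivatives

variable {f : ℝ × ℝ → ℝ} {p : ℝ × ℝ}

theorem pdx_eq_fderiv (hf : DifferentiableAt ℝ f p) : pdx f p = fderiv ℝ f p (1, 0) := by
  exact (hf.hasFDerivAt.comp_hasDerivAt p.1
    ((hasDerivAt_id p.1).prodMk (hasDerivAt_const p.1 p.2))).deriv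

theorem pdy_eq_fderiv (hf : DifferentiableAt ℝ f p) : pdy f p = fderiv ℝ f p (0, 1) := by
  exact (hf.hasFDerivAt.comp_hasDerivAt p.2
    ((hasDerivAt_const p.2 p.1).prodMk (hasDerivAt_id p.2))).deriv

theorem fderiv_apply_eq_pdx_add_pdy (hf : DifferentiableAt ℝ f p) (u v : ℝ) :
    fderiv ℝ f p (u, v) = u * pdx f p + v * pdy f p := by
  have huv : ((u, v) : ℝ × ℝ) = u • ((1 : ℝ), (0 : ℝ)) + v • ((0 : ℝ), (1 : ℝ)) := by simp
  rw [huv, map_add, map_smul, map_smul, smul_eq_mul, smul_eq_mul, pdx_eq_fderiv hf,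
    pdy_eq_fderiv hf]

theorem continuousOn_pdx {s : Set (ℝ × ℝ)} (hs : IsOpen s) (hf : ContDiffOn ℝ 1 f s) :
    ContinuousOn (pdx f) s :=
  ((hf.continuousOn_fderiv_of_isOpen hs le_rfl).clm_apply continuousOn_const).congr fun _ hp =>
    pdx_eq_fderiv ((hf.contDiffAt (hs.mem_nhds hp)).differentiableAt one_ne_zero)

theorem hasDerivAt_comp_graph {γ : ℝ → ℝ} {x : ℝ} (hf : DifferentiableAt ℝ f (x, γ x))
    (hγ : DifferentiableAt ℝ γ x) :
    HasDerivAt (fun t => f (t, γ t)) (pdx f (x, γ x) + deriv γ x * pdy f (x, γ x)) x := by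
  have := hf.hasFDerivAt.comp_hasDerivAt x ((hasDerivAt_id x).prodMk hγ.hasDerivAt)
  rwa [fderiv_apply_eq_pdx_add_pdy hf, one_mul] at this

end PartialDerivatives

theorem exists_implicitFunction {F : ℝ × ℝ → ℝ} {u : ℝ × ℝ} {s : Set (ℝ × ℝ)}
    {n : WithTop ℕ∞} (hF : ContDiffAt ℝ n F u) (hn : n ≠ 0) (hFy : pdy F u ≠ 0)
    (hs : s ∈ 𝓝 u) :
    ∃ g : ℝ → ℝ, ContDiffAt ℝ n g u.1 ∧ g u.1 = u.2 ∧
      ∀ᶠ x in 𝓝 u.1, (x, g x) ∈ s ∧ F (x, g x) = F u := by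
  have hinv : (fderiv ℝ F u ∘L .inr ℝ ℝ ℝ).IsInvertible := by
    have happ : ∀ v, (fderiv ℝ F u ∘L .inr ℝ ℝ ℝ) v = pdy F u * v := fun v => by
      simp [fderiv_apply_eq_pdx_add_pdy (hF.differentiableAt hn), mul_comm]
    refine .of_inverse (g := (pdy F u)⁻¹ • .id ℝ ℝ) ?_ ?_ <;> ext <;> simp [happ, hFy]
  refine ⟨hF.implicitFunction hn hinv, hF.contDiffAt_implicitFunction hn hinv,
    hF.implicitFunction_apply_self hn hinv, ?_⟩
  have hgraph : ContinuousAt (fun x => (x, hF.implicitFunction hn hinv x)) u.1 :=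
    continuousAt_id.prodMk (hF.contDiffAt_implicitFunction hn hinv).continuousAt
  have hs' : s ∈ 𝓝 (u.1, hF.implicitFunction hn hinv u.1) := by
    rwa [hF.implicitFunction_apply_self hn hinv]
  exact (hgraph.eventually_mem hs').and (hF.eventually_apply_implicitFunction hn hinv)

theorem exists_localSection {f : ℝ × ℝ → ℝ} {p : ℝ × ℝ} {s : Set (ℝ × ℝ)} {n : WithTop ℕ∞}
    (hf : ContDiffAt ℝ n f p) (hn : n ≠ 0) (hfy : pdy f p ≠ 0) (hs : s ∈ 𝓝 p) :
    ∃ ψ : ℝ → ℝ, ContDiffAt ℝ n ψ (f p) ∧ ψ (f p) = p.2 ∧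
      ∀ᶠ c in 𝓝 (f p), (p.1, ψ c) ∈ s ∧ f (p.1, ψ c) = c := by
  have hvert : ContDiffAt ℝ n (fun z : ℝ × ℝ => f (p.1, z.2)) (f p, p.2) :=
    hf.comp (f p, p.2) (contDiffAt_const.prodMk contDiffAt_snd)
  have hFy : pdy (fun z : ℝ × ℝ => f (p.1, z.2) - z.1) (f p, p.2) ≠ 0 := by
    simpa [pdy] using hfy
  have hs' : {z : ℝ × ℝ | (p.1, z.2) ∈ s} ∈ 𝓝 (f p, p.2) :=
    (continuous_const.prodMk continuous_snd).continuousAt.preimage_mem_nhds hs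
  obtain ⟨ψ, hψ, hψp, hev⟩ := exists_implicitFunction (hvert.sub contDiffAt_fst) hn hFy hs'
  exact ⟨ψ, hψ, hψp, hev.mono fun c hc => ⟨hc.1, by simpa [sub_eq_zero] using hc.2⟩⟩

theorem hasDerivAt_comp_levelCurve_eq_zero {f τ : ℝ × ℝ → ℝ} {γ : ℝ → ℝ} {x y : ℝ}
    (hf : DifferentiableAt ℝ f (x, y)) (hτ : DifferentiableAt ℝ τ (x, y))
    (hγ : DifferentiableAt ℝ γ x) (hγx : γ x = y) (hlevel : ∀ᶠ t in 𝓝 x, f (t, γ t) = f (x, y))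
    (hfy : pdy f (x, y) ≠ 0) (heq : pdy f (x, y) * pdx τ (x, y) = pdx f (x, y) * pdy τ (x, y)) :
    HasDerivAt (fun t => τ (t, γ t)) 0 x := by
  subst hγx
  have hf0 : pdx f (x, γ x) + deriv γ x * pdy f (x, γ x) = 0 :=
    (hasDerivAt_comp_graph hf hγ).unique ((hasDerivAt_const x _).congr_of_eventuallyEq hlevel)
  have hτ0 : pdx τ (x, γ x) + deriv γ x * pdy τ (x, γ x) = 0 := by
    refine mul_left_cancel₀ hfy ?_
    linear_combination heq + pdy τ (x, γ x) * hf0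
  simpa [hτ0] using hasDerivAt_comp_graph hτ hγ

/-- `τ` is a first integral of `∂₁ - ∂₂ = (f_x f_y)⁻¹ (f_x ∂_y - f_y ∂_x)` on `s`, with the
denominator cleared. -/
def IsFirstIntegral (f τ : ℝ × ℝ → ℝ) (s : Set (ℝ × ℝ)) : Prop :=
  ∀ p ∈ s, pdy f p * pdx τ p = pdx f p * pdy τ p

section Rectangle

variable {I J : Set ℝ} {f : ℝ × ℝ → ℝ}

theorem injOn_slice (hJ : IsOpen J) (hJc : J.OrdConnected) (hf : ContDiffOn ℝ 1 f (I ×ˢ J))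
    (hfy : ∀ p ∈ I ×ˢ J, pdy f p ≠ 0) {x : ℝ} (hx : x ∈ I) : InjOn (fun y => f (x, y)) J :=
  injOn_of_deriv_ne_zero hJ hJc
    ((hf.differentiableOn one_ne_zero).comp (by fun_prop) fun _ hy => mk_mem_prod hx hy)
    fun y hy => hfy (x, y) (mk_mem_prod hx hy)

theorem strictMonoOn_slices_or_strictAntiOn_slices (hI : IsOpen I) (hJ : IsOpen J)
    (hIc : I.OrdConnected) (hJc : J.OrdConnected) (hf : ContDiffOn ℝ 1 f (I ×ˢ J))
    (hfx : ∀ p ∈ I ×ˢ J, pdx f p ≠ 0) :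
    (∀ y ∈ J, StrictMonoOn (fun x => f (x, y)) I) ∨
      ∀ y ∈ J, StrictAntiOn (fun x => f (x, y)) I := by
  have hslice : ∀ y ∈ J, ContinuousOn (fun x => f (x, y)) I := fun y hy =>
    hf.continuousOn.comp (by fun_prop) fun x hx => mk_mem_prod hx hy
  rcases (hIc.isPreconnected.prod hJc.isPreconnected).forall_pos_or_forall_neg
    (continuousOn_pdx (hI.prod hJ) hf) hfx with hpos | hneg
  · refine .inl fun y hy => strictMonoOn_of_deriv_pos hIc.convex (hslice y hy) fun x hx => ?_
    exact hpos (x, y) (mk_mem_prod (hI.interior_eq ▸ hx) hy)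
  · refine .inr fun y hy => strictAntiOn_of_deriv_neg hIc.convex (hslice y hy) fun x hx => ?_
    exact hneg (x, y) (mk_mem_prod (hI.interior_eq ▸ hx) hy)

theorem ordConnected_setOf_exists_apply_eq (hI : IsOpen I) (hJ : IsOpen J)
    (hIc : I.OrdConnected) (hJc : J.OrdConnected) (hf : ContDiffOn ℝ 1 f (I ×ˢ J))
    (hfx : ∀ p ∈ I ×ˢ J, pdx f p ≠ 0) (c : ℝ) :
    {x ∈ I | ∃ y ∈ J, f (x, y) = c}.OrdConnected := by
  refine ⟨?_⟩
  rintro x₁ ⟨hx₁, y₁, hy₁, rfl⟩ x₂ ⟨hx₂, y₂, hy₂, hc⟩ x ⟨h₁, h₂⟩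
  have hx : x ∈ I := hIc.out hx₁ hx₂ ⟨h₁, h₂⟩
  have hmem : f (x₁, y₁) ∈ uIcc (f (x, y₁)) (f (x, y₂)) := by
    rcases strictMonoOn_slices_or_strictAntiOn_slices hI hJ hIc hJc hf hfx with hmono | hanti
    · exact mem_uIcc.2 <| .inr ⟨hc ▸ (hmono y₂ hy₂).monotoneOn hx hx₂ h₂,
        (hmono y₁ hy₁).monotoneOn hx₁ hx h₁⟩
    · exact mem_uIcc.2 <| .inl ⟨(hanti y₁ hy₁).antitoneOn hx₁ hx h₁,
        hc ▸ (hanti y₂ hy₂).antitoneOn hx hx₂ h₂⟩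
  have hsub : uIcc y₁ y₂ ⊆ J := hJc.uIcc_subset hy₁ hy₂
  obtain ⟨y, hy, hyc⟩ := intermediate_value_uIcc
    (hf.continuousOn.comp (by fun_prop) fun y hy => mk_mem_prod hx (hsub hy)) hmem
  exact ⟨hx, y, hsub hy, hyc⟩

theorem IsFirstIntegral.apply_eq_of_apply_eq {τ : ℝ × ℝ → ℝ} (hτ : IsFirstIntegral f τ (I ×ˢ J))
    (hI : IsOpen I) (hJ : IsOpen J) (hIc : I.OrdConnected) (hJc : J.OrdConnected)
    (hf : ContDiffOn ℝ 1 f (I ×ˢ J)) (hτd : DifferentiableOn ℝ τ (I ×ˢ J))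
    (hfx : ∀ p ∈ I ×ˢ J, pdx f p ≠ 0) (hfy : ∀ p ∈ I ×ˢ J, pdy f p ≠ 0)
    {p q : ℝ × ℝ} (hp : p ∈ I ×ˢ J) (hq : q ∈ I ×ˢ J) (hpq : f p = f q) : τ p = τ q := by
  have hU : IsOpen (I ×ˢ J) := hI.prod hJ
  set L := {x ∈ I | ∃ y ∈ J, f (x, y) = f p}
  choose! Y hYJ hYf using fun x (hx : x ∈ L) => hx.2
  have hYeq : ∀ x ∈ L, ∀ y ∈ J, f (x, y) = f p → Y x = y := fun x hx y hy hxy =>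
    injOn_slice hJ hJc hf hfy hx.1 (hYJ x hx) hy ((hYf x hx).trans hxy.symm)
  have hlocal : ∀ x ∈ L, L ∈ 𝓝 x ∧ HasDerivAt (fun t => τ (t, Y t)) 0 x := by
    intro x hx
    have hxU : (x, Y x) ∈ I ×ˢ J := mk_mem_prod hx.1 (hYJ x hx)
    have hfx₀ : ContDiffAt ℝ 1 f (x, Y x) := hf.contDiffAt (hU.mem_nhds hxU)
    obtain ⟨γ, hγ, hγx, hev⟩ :=
      exists_implicitFunction hfx₀ one_ne_zero (hfy _ hxU) (hU.mem_nhds hxU)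
    have hYγ : ∀ᶠ t in 𝓝 x, t ∈ L ∧ Y t = γ t := hev.mono fun t ⟨htU, ht⟩ =>
      have htL : t ∈ L := ⟨htU.1, γ t, htU.2, ht.trans (hYf x hx)⟩
      ⟨htL, hYeq t htL (γ t) htU.2 (ht.trans (hYf x hx))⟩
    refine ⟨hYγ.mono fun t ht => ht.1, ?_⟩
    refine (hasDerivAt_comp_levelCurve_eq_zero (hfx₀.differentiableAt one_ne_zero)
      ((hτd _ hxU).differentiableAt (hU.mem_nhds hxU)) (hγ.differentiableAt one_ne_zero) hγx
      (hev.mono fun t ht => ht.2) (hfy _ hxU) (hτ _ hxU)).congr_of_eventuallyEq ?_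
    exact hYγ.mono fun t ht => by simp only [ht.2]
  have hpL : p.1 ∈ L := ⟨hp.1, p.2, hp.2, rfl⟩
  have hqL : q.1 ∈ L := ⟨hq.1, q.2, hq.2, hpq.symm⟩
  have hconst := (isOpen_iff_mem_nhds.2 fun x hx => (hlocal x hx).1).is_const_of_deriv_eq_zero
    (ordConnected_setOf_exists_apply_eq hI hJ hIc hJc hf hfx (f p)).isPreconnected
    (fun x hx => (hlocal x hx).2.differentiableAt.differentiableWithinAt)
    (fun x hx => (hlocal x hx).2.deriv) hpL hqL
  rwa [hYeq p.1 hpL p.2 hp.2 rfl, hYeq q.1 hqL q.2 hq.2 hpq.symm] at hconst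

end Rectangle

/-- First integrals of `δ = ∂₁ - ∂₂`: a smooth `τ` on `U = I ×ˢ J`
with `f_y·∂τ/∂x = f_x·∂τ/∂y` on `U` factors through `f`, i.e. `τ = w ∘ f` for some
smooth `w` on the image `f(U)`, which is open and order-connected (an open interval). -/
theorem samuelson_first_integral_factors
    (I J : Set ℝ) (hI : IsOpen I) (hJ : IsOpen J)
    (hIc : I.OrdConnected) (hJc : J.OrdConnected)
    (f : ℝ × ℝ → ℝ) (hf : ContDiffOn ℝ (⊤ : ℕ∞) f (I ×ˢ J))
    (hfx : ∀ p ∈ I ×ˢ J, pdx f p ≠ 0) (hfy : ∀ p ∈ I ×ˢ J, pdy f p ≠ 0)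
    (τ : ℝ × ℝ → ℝ) (hτ : ContDiffOn ℝ (⊤ : ℕ∞) τ (I ×ˢ J))
    (heq : ∀ p ∈ I ×ˢ J, pdy f p * pdx τ p = pdx f p * pdy τ p) :
    IsOpen (f '' (I ×ˢ J)) ∧ (f '' (I ×ˢ J)).OrdConnected ∧
      ∃ w : ℝ → ℝ, ContDiffOn ℝ (⊤ : ℕ∞) w (f '' (I ×ˢ J)) ∧
        ∀ p ∈ I ×ˢ J, τ p = w (f p) := by
  have hU : IsOpen (I ×ˢ J) := hI.prod hJ
  have hn : ((⊤ : ℕ∞) : WithTop ℕ∞) ≠ 0 := by simp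
  have hfib : ∀ p ∈ I ×ˢ J, ∀ q ∈ I ×ˢ J, f p = f q → τ p = τ q := fun p hp q hq =>
    IsFirstIntegral.apply_eq_of_apply_eq heq hI hJ hIc hJc (hf.of_le (by exact_mod_cast le_top))
      (hτ.differentiableOn hn) hfx hfy hp hq
  have hsection := fun p (hp : p ∈ I ×ˢ J) =>
    exists_localSection (hf.contDiffAt (hU.mem_nhds hp)) hn (hfy p hp) (hU.mem_nhds hp)
  refine ⟨isOpen_iff_mem_nhds.2 ?_,
    ((hIc.isPreconnected.prod hJc.isPreconnected).image f hf.continuousOn).ordConnected,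
    τ ∘ Function.invFunOn f (I ×ˢ J), ?_, fun p hp => (apply_invFunOn_apply_eq hfib hp).symm⟩
  · rintro _ ⟨p, hp, rfl⟩
    obtain ⟨ψ, -, -, hψ⟩ := hsection p hp
    exact hψ.mono fun c hc => ⟨_, hc.1, hc.2⟩
  · rintro _ ⟨p, hp, rfl⟩
    obtain ⟨ψ, hψ, hψp, hev⟩ := hsection p hp
    have hτψ : ContDiffAt ℝ (⊤ : ℕ∞) (fun c => τ (p.1, ψ c)) (f p) := by
      refine ContDiffAt.comp (f p) ?_ (contDiffAt_const.prodMk hψ)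
      rw [hψp]
      exact hτ.contDiffAt (hU.mem_nhds hp)
    refine (hτψ.congr_of_eventuallyEq (hev.mono fun c hc => ?_)).contDiffWithinAt
    simpa only [Function.comp_apply, hc.2] using apply_invFunOn_apply_eq hfib hc.1
end

section
/- Let b₁ : I → ℝ and b₂ : J → ℝ be smooth and positive, set b(x,y) = b₁(x)·b₂(y), and let B : U → ℝ be smooth. Then there exist differentiable s₁ : I → ℝ and s₂ : J → ℝ with b(x,y)·s₁′(x) + s₂′(y) = B(x,y) on U if and only if ∂²(B/b₂)/∂x∂y = 0 on U. Moreover, when solutions exist, the set of solution pairs (s₁, s₂) is a 3-dimensional affine subspace: the differences of any two solutions form the 3-parameter family s₁ − s̃₁ = c·∫ b₁⁻¹ dx + c₁, s₂ − s̃₂ = −c·∫ b₂ dy + c₂ with c, c₁, c₂ ∈ ℝ. -/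
open Set

/-!
Dividing by `b₂` turns the equation into `B/b₂ = b₁(x) s₁'(x) + s₂'(y)/b₂(y)`, so it is solvable
exactly when `G = B/b₂` is a sum of a function of `x` and a function of `y`. On a rectangle this
is equivalent to `∂ᵧ∂ₓG = 0`: integrating once in `y` and once in `x` gives
`G(x,y) = G(x,y₀) + G(x₀,y) - G(x₀,y₀)`, and then `s₁`, `s₂` are antiderivatives of
`(G(x,y₀) - G(x₀,y₀))/b₁` and `b₂ G(x₀,·)`. The difference `(u, v)` of the derivatives of two
solutions satisfies `b₁(x) b₂(y) u(x) + v(y) = 0`, which forces `b₁ u` to be constant.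
-/

theorem ContinuousOn.exists_forall_hasDerivAt {E : Type*} [NormedAddCommGroup E]
    [NormedSpace ℝ E] [CompleteSpace E] {I : Set ℝ} (hI : IsOpen I) (hIc : I.OrdConnected)
    {f : ℝ → E} (hf : ContinuousOn f I) : ∃ s : ℝ → E, ∀ x ∈ I, HasDerivAt s (f x) x := by
  rcases I.eq_empty_or_nonempty with rfl | ⟨x₀, hx₀⟩
  · exact ⟨0, by simp⟩
  refine ⟨fun x => ∫ t in x₀..x, f t, fun x hx => ?_⟩
  exact intervalIntegral.integral_hasDerivAt_right
    ((hf.mono (hIc.uIcc_subset hx₀ hx)).intervalIntegrable)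
    (hf.stronglyMeasurableAtFilter hI x hx) (hf.continuousAt (hI.mem_nhds hx))

section PartialDerivatives

variable {G : ℝ × ℝ → ℝ}

theorem DifferentiableAt.hasDerivAt_pdx {x y : ℝ} (hG : DifferentiableAt ℝ G (x, y)) :
    HasDerivAt (fun t => G (t, y)) (pdx G (x, y)) x :=
  (hG.comp x (differentiableAt_id.prodMk (differentiableAt_const y))).hasDerivAt

theorem pdx_eq_fderiv_apply {p : ℝ × ℝ} (hG : DifferentiableAt ℝ G p) :
    pdx G p = fderiv ℝ G p (1, 0) :=
  (hG.hasFDerivAt.comp_hasDerivAt p.1 ((hasDerivAt_id p.1).prodMk (hasDerivAt_const p.1 p.2))).deriv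

theorem ContDiffOn.pdx {n : WithTop ℕ∞} {U : Set (ℝ × ℝ)} (hU : IsOpen U)
    (hG : ContDiffOn ℝ (n + 1) G U) : ContDiffOn ℝ n (pdx G) U :=
  ((hG.fderiv_of_isOpen hU le_rfl).clm_apply contDiffOn_const).congr fun _ hp =>
    pdx_eq_fderiv_apply ((hG.differentiableOn (by simp)).differentiableAt (hU.mem_nhds hp))

variable {I J : Set ℝ}

theorem pdy_pdx_eq_zero_of_eq_add (hI : IsOpen I) (hJ : IsOpen J) {f g : ℝ → ℝ}
    (hG : ∀ p ∈ I ×ˢ J, G p = f p.1 + g p.2) : ∀ p ∈ I ×ˢ J, pdy (pdx G) p = 0 := by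
  rintro ⟨x, y⟩ ⟨hx, hy⟩
  have hpdx : ∀ y' ∈ J, pdx G (x, y') = deriv f x := fun y' hy' => by
    have hsection : (fun t => G (t, y')) =ᶠ[nhds x] fun t => f t + g y' := by
      filter_upwards [hI.mem_nhds hx] with t ht using hG (t, y') ⟨ht, hy'⟩
    exact hsection.deriv_eq.trans (deriv_add_const _)
  have hconst : (fun y' => pdx G (x, y')) =ᶠ[nhds y] fun _ => deriv f x := by
    filter_upwards [hJ.mem_nhds hy] with y' hy' using hpdx y' hy'
  exact hconst.deriv_eq.trans (deriv_const y _)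

theorem eq_add_sub_of_pdy_pdx_eq_zero (hI : IsOpen I) (hJ : IsOpen J)
    (hIc : I.OrdConnected) (hJc : J.OrdConnected) (hG : ContDiffOn ℝ 2 G (I ×ˢ J))
    (hmix : ∀ p ∈ I ×ˢ J, pdy (pdx G) p = 0) {x₀ y₀ : ℝ} (hx₀ : x₀ ∈ I) (hy₀ : y₀ ∈ J) :
    ∀ x ∈ I, ∀ y ∈ J, G (x, y) = G (x, y₀) + G (x₀, y) - G (x₀, y₀) := by
  have hU : IsOpen (I ×ˢ J) := hI.prod hJ
  have hGd : ∀ x ∈ I, ∀ y ∈ J, DifferentiableAt ℝ G (x, y) := fun x hx y hy =>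
    (hG.differentiableOn (by norm_num)).differentiableAt (hU.mem_nhds ⟨hx, hy⟩)
  have hpdx : DifferentiableOn ℝ (pdx G) (I ×ˢ J) :=
    (ContDiffOn.pdx (n := 1) hU hG).differentiableOn one_ne_zero
  have hpdx_const : ∀ x ∈ I, ∀ y ∈ J, pdx G (x, y) = pdx G (x, y₀) := fun x hx y hy =>
    hJ.is_const_of_deriv_eq_zero hJc.isPreconnected (f := fun y => pdx G (x, y))
      (fun y' hy' => ((hpdx.differentiableAt (hU.mem_nhds ⟨hx, hy'⟩)).comp y'
        ((differentiableAt_const x).prodMk differentiableAt_id)).differentiableWithinAt)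
      (fun y' hy' => hmix (x, y') ⟨hx, hy'⟩) hy hy₀
  intro x hx y hy
  have hdiff : ∀ t ∈ I, HasDerivAt (fun t => G (t, y) - G (t, y₀)) 0 t := fun t ht => by
    simpa [hpdx_const t ht y hy] using
      (hGd t ht y hy).hasDerivAt_pdx.fun_sub (hGd t ht y₀ hy₀).hasDerivAt_pdx
  have hconst := hI.is_const_of_deriv_eq_zero hIc.isPreconnected
    (fun t ht => (hdiff t ht).differentiableAt.differentiableWithinAt)
    (fun t ht => (hdiff t ht).deriv) hx hx₀
  linarith

end PartialDerivatives

theorem exists_eq_mul_deriv_add_deriv_div_of_eq_add_sub {I J : Set ℝ} (hI : IsOpen I)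
    (hJ : IsOpen J) (hIc : I.OrdConnected) (hJc : J.OrdConnected) {b₁ b₂ : ℝ → ℝ}
    (hb₁ : ContinuousOn b₁ I) (hb₂ : ContinuousOn b₂ J) (hb₁ne : ∀ x ∈ I, b₁ x ≠ 0)
    (hb₂ne : ∀ y ∈ J, b₂ y ≠ 0) {G : ℝ × ℝ → ℝ} (hG : ContinuousOn G (I ×ˢ J))
    {x₀ y₀ : ℝ} (hx₀ : x₀ ∈ I) (hy₀ : y₀ ∈ J)
    (hsep : ∀ x ∈ I, ∀ y ∈ J, G (x, y) = G (x, y₀) + G (x₀, y) - G (x₀, y₀)) :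
    ∃ s₁ s₂ : ℝ → ℝ, DifferentiableOn ℝ s₁ I ∧ DifferentiableOn ℝ s₂ J ∧
      ∀ p ∈ I ×ˢ J, G p = b₁ p.1 * deriv s₁ p.1 + deriv s₂ p.2 / b₂ p.2 := by
  have hGx : ContinuousOn (fun x => G (x, y₀)) I :=
    hG.comp (by fun_prop) fun x hx => ⟨hx, hy₀⟩
  have hGy : ContinuousOn (fun y => G (x₀, y)) J :=
    hG.comp (by fun_prop) fun y hy => ⟨hx₀, hy⟩
  have hf₁ : ContinuousOn (fun x => (G (x, y₀) - G (x₀, y₀)) / b₁ x) I :=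
    (hGx.sub continuousOn_const).div hb₁ hb₁ne
  have hf₂ : ContinuousOn (fun y => b₂ y * G (x₀, y)) J := hb₂.mul hGy
  obtain ⟨s₁, hs₁⟩ := hf₁.exists_forall_hasDerivAt hI hIc
  obtain ⟨s₂, hs₂⟩ := hf₂.exists_forall_hasDerivAt hJ hJc
  refine ⟨s₁, s₂, fun x hx => (hs₁ x hx).differentiableAt.differentiableWithinAt,
    fun y hy => (hs₂ y hy).differentiableAt.differentiableWithinAt, ?_⟩
  rintro ⟨x, y⟩ ⟨hx, hy⟩
  have := hb₁ne x hx
  have := hb₂ne y hy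
  rw [(hs₁ x hx).deriv, (hs₂ y hy).deriv, hsep x hx y hy]
  field_simp
  ring

theorem mul_mul_add_eq_iff_div_eq {a₁ a₂ u v B : ℝ} (ha₂ : a₂ ≠ 0) :
    a₁ * a₂ * u + v = B ↔ B / a₂ = a₁ * u + v / a₂ := by
  rw [eq_comm (a := B / a₂), eq_div_iff ha₂, add_mul, div_mul_cancel₀ _ ha₂, mul_right_comm]

theorem exists_eq_mul_inv_of_mul_mul_add_eq_zero {I J : Set ℝ} {b₁ b₂ u v : ℝ → ℝ}
    {x₀ y₀ : ℝ} (hx₀ : x₀ ∈ I) (hy₀ : y₀ ∈ J) (hb₁ : ∀ x ∈ I, b₁ x ≠ 0) (hb₂ : b₂ y₀ ≠ 0)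
    (h : ∀ x ∈ I, ∀ y ∈ J, b₁ x * b₂ y * u x + v y = 0) :
    ∃ c : ℝ, (∀ x ∈ I, u x = c * (b₁ x)⁻¹) ∧ ∀ y ∈ J, v y = -c * b₂ y := by
  refine ⟨b₁ x₀ * u x₀, fun x hx => ?_, fun y hy => by linear_combination h x₀ hx₀ y hy⟩
  have hc : b₁ x * u x = b₁ x₀ * u x₀ :=
    mul_right_cancel₀ hb₂ (by linear_combination h x hx y₀ hy₀ - h x₀ hx₀ y₀ hy₀)
  rw [← hc, mul_comm (b₁ x), mul_inv_cancel_right₀ (hb₁ x hx)]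

/-- The singular case `b(x,y) = b₁(x)·b₂(y)` of the equation
`b·s₁'(x) + s₂'(y) = B(x,y)`: differentiable solutions `s₁, s₂` exist on `U` iff
`∂²(B/b₂)/∂x∂y = 0` on `U`; moreover, when solutions exist, the differences of
any two solution pairs form the 3-parameter family
`s₁ - s̃₁ = c·∫ b₁⁻¹ dx + c₁`, `s₂ - s̃₂ = -c·∫ b₂ dy + c₂` (recorded here by
`(s₁ - s̃₁)' = c·b₁⁻¹` on `I` and `(s₂ - s̃₂)' = -c·b₂` on `J`). -/
theorem samuelson_singular_s_equation
    (I J : Set ℝ) (hI : IsOpen I) (hJ : IsOpen J)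
    (hIc : I.OrdConnected) (hJc : J.OrdConnected)
    (hne : (I ×ˢ J : Set (ℝ × ℝ)).Nonempty)
    (b₁ b₂ : ℝ → ℝ)
    (hb₁ : ContDiffOn ℝ (⊤ : ℕ∞) b₁ I) (hb₂ : ContDiffOn ℝ (⊤ : ℕ∞) b₂ J)
    (hb₁pos : ∀ x ∈ I, 0 < b₁ x) (hb₂pos : ∀ y ∈ J, 0 < b₂ y)
    (b : ℝ × ℝ → ℝ) (hb : ∀ p : ℝ × ℝ, b p = b₁ p.1 * b₂ p.2)
    (B : ℝ × ℝ → ℝ) (hB : ContDiffOn ℝ (⊤ : ℕ∞) B (I ×ˢ J)) :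
    ((∃ s₁ s₂ : ℝ → ℝ, DifferentiableOn ℝ s₁ I ∧ DifferentiableOn ℝ s₂ J ∧
        ∀ p ∈ I ×ˢ J, b p * deriv s₁ p.1 + deriv s₂ p.2 = B p) ↔
      (∀ p ∈ I ×ˢ J, pdy (pdx (fun q => B q / b₂ q.2)) p = 0)) ∧
    (∀ s₁ s₂ t₁ t₂ : ℝ → ℝ,
      DifferentiableOn ℝ s₁ I → DifferentiableOn ℝ s₂ J →
      DifferentiableOn ℝ t₁ I → DifferentiableOn ℝ t₂ J →
      (∀ p ∈ I ×ˢ J, b p * deriv s₁ p.1 + deriv s₂ p.2 = B p) →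
      (∀ p ∈ I ×ˢ J, b p * deriv t₁ p.1 + deriv t₂ p.2 = B p) →
      ∃ c : ℝ,
        (∀ x ∈ I, deriv s₁ x - deriv t₁ x = c * (b₁ x)⁻¹) ∧
        (∀ y ∈ J, deriv s₂ y - deriv t₂ y = -c * b₂ y)) := by
  obtain ⟨⟨x₀, y₀⟩, hx₀ : x₀ ∈ I, hy₀ : y₀ ∈ J⟩ := hne
  have hb₂ne : ∀ y ∈ J, b₂ y ≠ 0 := fun y hy => (hb₂pos y hy).ne'
  simp only [hb]
  set G : ℝ × ℝ → ℝ := fun q => B q / b₂ q.2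
  refine ⟨⟨fun ⟨s₁, s₂, _, _, hs⟩ => ?_, fun hmix => ?_⟩, ?_⟩
  · exact pdy_pdx_eq_zero_of_eq_add hI hJ (f := fun x => b₁ x * deriv s₁ x)
      (g := fun y => deriv s₂ y / b₂ y) fun p hp =>
      ((mul_mul_add_eq_iff_div_eq (hb₂ne _ hp.2)).1 (hs p hp))
  · have hG : ContDiffOn ℝ 2 G (I ×ˢ J) :=
      (hB.div (hb₂.comp contDiffOn_snd fun _ hp => hp.2) fun p hp => hb₂ne _ hp.2).of_le
        (WithTop.coe_le_coe.2 le_top)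
    obtain ⟨s₁, s₂, hs₁, hs₂, hs⟩ := exists_eq_mul_deriv_add_deriv_div_of_eq_add_sub hI hJ hIc hJc
      hb₁.continuousOn hb₂.continuousOn (fun x hx => (hb₁pos x hx).ne') hb₂ne hG.continuousOn
      hx₀ hy₀ (eq_add_sub_of_pdy_pdx_eq_zero hI hJ hIc hJc hG hmix hx₀ hy₀)
    exact ⟨s₁, s₂, hs₁, hs₂, fun p hp => (mul_mul_add_eq_iff_div_eq (hb₂ne _ hp.2)).2 (hs p hp)⟩
  · intro s₁ s₂ t₁ t₂ _ _ _ _ hs ht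
    exact exists_eq_mul_inv_of_mul_mul_add_eq_zero hx₀ hy₀ (fun x hx => (hb₁pos x hx).ne')
      (hb₂ne y₀ hy₀) fun x hx y hy => by linear_combination hs (x, y) ⟨hx, hy⟩ - ht (x, y) ⟨hx, hy⟩
end
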